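/- arXiv:2603.28148 — 8 statements merged into one kernel-verified Lean document; each statement's English description precedes it below -/
import Mathlib

section
/- Let α, β be real constants satisfying 2β² - 9α = 0, with β ≠ 0. Set ρ = √(β²-4α) (so ρ² = β²/9). Then for the vector field X = v ∂_w - (βv + αw) ∂_v and arbitrary constants c₁, c₂, the quadratic function Z₃ = c₁(2v + (β+ρ)w)² + c₂(2v + (β-ρ)w) satisfies X(Z₃) = -(2β/3) Z₃. -/
private lemma aux (c₁ c₂ a a' b d x : ℝ) :
    HasDerivAt (fun t : ℝ => c₁ * (a + b * t) ^ 2 + c₂ * (a' + d * t))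
      (c₁ * (2 * (a + b * x) * b) + c₂ * d) x := by
  have h1 : HasDerivAt (fun t : ℝ => a + b * t) b x := by
    simpa using ((hasDerivAt_id x).const_mul b).const_add a
  have h3 : HasDerivAt (fun t : ℝ => a' + d * t) d x := by
    simpa using ((hasDerivAt_id x).const_mul d).const_add a'
  have := ((h1.pow 2).const_mul c₁).add (h3.const_mul c₂)
  refine this.congr_deriv ?_
  ring

/-- Under 2β² - 9α = 0 (with ρ = β/3), the quadratic
Z₃ = c₁(2v+(β+ρ)w)² + c₂(2v+(β-ρ)w) is an invariant of
X = v ∂_w - (βv + αw) ∂_v with cofactor -2β/3. -/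
theorem stmt3 (α β c₁ c₂ : ℝ) (hβ : β ≠ 0) (hαβ : 2 * β ^ 2 - 9 * α = 0) :
    ∀ w v : ℝ,
      v * deriv (fun w' : ℝ =>
            c₁ * (2 * v + (β + β / 3) * w') ^ 2 + c₂ * (2 * v + (β - β / 3) * w')) w
        + (-(β * v + α * w)) * deriv (fun v' : ℝ =>
            c₁ * (2 * v' + (β + β / 3) * w) ^ 2 + c₂ * (2 * v' + (β - β / 3) * w)) v
        = (-(2 * β / 3)) *
            (c₁ * (2 * v + (β + β / 3) * w) ^ 2 + c₂ * (2 * v + (β - β / 3) * w)) := by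
  intro w v
  have d1 : deriv (fun w' : ℝ =>
      c₁ * (2 * v + (β + β / 3) * w') ^ 2 + c₂ * (2 * v + (β - β / 3) * w')) w
      = c₁ * (2 * (2 * v + (β + β / 3) * w) * (β + β / 3)) + c₂ * (β - β / 3) :=
    (aux c₁ c₂ (2 * v) (2 * v) (β + β / 3) (β - β / 3) w).deriv
  have e2 : (fun v' : ℝ =>
      c₁ * (2 * v' + (β + β / 3) * w) ^ 2 + c₂ * (2 * v' + (β - β / 3) * w))
      = (fun v' : ℝ => c₁ * ((β + β / 3) * w + 2 * v') ^ 2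
          + c₂ * ((β - β / 3) * w + 2 * v')) := by
    funext t; ring_nf
  have d2 : deriv (fun v' : ℝ =>
      c₁ * (2 * v' + (β + β / 3) * w) ^ 2 + c₂ * (2 * v' + (β - β / 3) * w)) v
      = c₁ * (2 * ((β + β / 3) * w + 2 * v) * 2) + c₂ * 2 := by
    rw [e2]
    exact (aux c₁ c₂ ((β + β / 3) * w) ((β - β / 3) * w) 2 2 v).deriv
  rw [d1, d2]
  have hα : α = 2 * β ^ 2 / 9 := by linarith
  subst hα
  ring
end

section
/- Let f, g, h, k be smooth functions of y with g nowhere zero and f nowhere zero. Suppose there exist smooth positive functions ψ₁(x,y), ψ₃(x,y) (with ψ₂ = 0) solving the Liouville system 3ψ₁ₓ + 2fψ₁ = 0, 3ψ₃ᵧ - 2hψ₃ = 0, 3ψ₁ᵧ + 4hψ₁ - 6gψ₃ = 0, 3ψ₃ₓ + 6kψ₁ - 4fψ₃ = 0. Then f' = 0 (f is constant) and f k' = -2gk² + 2fhk. -/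
open Real

private lemma ode_exp (u : ℝ → ℝ) (c : ℝ) (hu : Differentiable ℝ u)
    (h : ∀ x, deriv u x = c * u x) (x : ℝ) : u x = u 0 * Real.exp (c * x) := by
  have hv : ∀ t, HasDerivAt (fun s => u s * Real.exp (-(c * s))) 0 t := by
    intro t
    have h1 : HasDerivAt u (c * u t) t := by
      have := (hu t).hasDerivAt
      rwa [h t] at this
    have h2 : HasDerivAt (fun s : ℝ => -(c * s)) (-(c * 1)) t :=
      ((hasDerivAt_id t).const_mul c).neg
    have h3 := h1.fun_mul h2.exp
    exact h3.congr_deriv (by ring)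
  have key : u x * Real.exp (-(c * x)) = u 0 * Real.exp (-(c * 0)) :=
    is_const_of_deriv_eq_zero (fun t => (hv t).differentiableAt)
      (fun t => (hv t).deriv) x 0
  have hx : Real.exp (-(c * x)) * Real.exp (c * x) = 1 := by
    rw [← Real.exp_add]; simp
  have hkey : u x * Real.exp (-(c * x)) = u 0 := by simpa using key
  calc u x = u x * (Real.exp (-(c * x)) * Real.exp (c * x)) := by rw [hx]; ring
    _ = (u x * Real.exp (-(c * x))) * Real.exp (c * x) := by ring
    _ = u 0 * Real.exp (c * x) := by rw [hkey]

/-- If the Liouville metrisability system with ψ₂ = 0 admits a positive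
solution (ψ₁, ψ₃), then f is constant and f k' = -2gk² + 2fhk. -/
theorem stmt5 (f g h k : ℝ → ℝ)
    (hf : ContDiff ℝ (⊤ : ℕ∞) f) (hg : ContDiff ℝ (⊤ : ℕ∞) g) (hh : ContDiff ℝ (⊤ : ℕ∞) h)
    (hk : ContDiff ℝ (⊤ : ℕ∞) k)
    (hg0 : ∀ y, g y ≠ 0) (hf0 : ∀ y, f y ≠ 0)
    (ψ₁ ψ₃ : ℝ → ℝ → ℝ)
    (hψ₁smooth : ContDiff ℝ (⊤ : ℕ∞) (fun p : ℝ × ℝ => ψ₁ p.1 p.2))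
    (hψ₃smooth : ContDiff ℝ (⊤ : ℕ∞) (fun p : ℝ × ℝ => ψ₃ p.1 p.2))
    (hψ₁pos : ∀ x y, 0 < ψ₁ x y) (hψ₃pos : ∀ x y, 0 < ψ₃ x y)
    (e₁ : ∀ x y, 3 * deriv (fun x' => ψ₁ x' y) x + 2 * f y * ψ₁ x y = 0)
    (e₂ : ∀ x y, 3 * deriv (fun y' => ψ₃ x y') y - 2 * h y * ψ₃ x y = 0)
    (e₃ : ∀ x y, 3 * deriv (fun y' => ψ₁ x y') y + 4 * h y * ψ₁ x y
            - 6 * g y * ψ₃ x y = 0)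
    (e₄ : ∀ x y, 3 * deriv (fun x' => ψ₃ x' y) x + 6 * k y * ψ₁ x y
            - 4 * f y * ψ₃ x y = 0) :
    ∀ y : ℝ, deriv f y = 0 ∧
      f y * deriv k y = -2 * g y * (k y) ^ 2 + 2 * f y * h y * k y := by
  have hfd : Differentiable ℝ f := hf.differentiable (by simp)
  have hgd : Differentiable ℝ g := hg.differentiable (by simp)
  have hhd : Differentiable ℝ h := hh.differentiable (by simp)
  have hkd : Differentiable ℝ k := hk.differentiable (by simp)
  set A : ℝ → ℝ := fun y => ψ₁ 0 y with hAdef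
  have hAc : ContDiff ℝ (⊤ : ℕ∞) A := hψ₁smooth.comp (contDiff_const.prodMk contDiff_id)
  have hAd : Differentiable ℝ A := hAc.differentiable (by simp)
  have hAinf : ContDiff ℝ ((⊤ : ℕ∞) : WithTop ℕ∞) A := hAc.of_le (by simp)
  have hA1d : Differentiable ℝ (deriv A) :=
    ((contDiff_infty_iff_deriv.mp hAinf).2).differentiable (by simp)
  have hApos : ∀ y, 0 < A y := fun y => hψ₁pos 0 y
  have hψ₁x : ∀ y, Differentiable ℝ fun x => ψ₁ x y := fun y =>
    (hψ₁smooth.differentiable (by simp)).comp (differentiable_id.prodMk (differentiable_const y))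
  have hψ₁eq : ∀ x y, ψ₁ x y = A y * Real.exp (-(2 * f y / 3) * x) := by
    intro x y
    exact ode_exp (fun x => ψ₁ x y) (-(2 * f y / 3)) (hψ₁x y)
      (fun x' => by linear_combination (e₁ x' y) / 3) x
  -- derivative of ψ₁ in y
  have hD2 : ∀ x y, HasDerivAt (fun y' => ψ₁ x y')
      ((deriv A y - 2 / 3 * deriv f y * x * A y) * Real.exp (-(2 * f y / 3) * x)) y := by
    intro x y
    have hfy : HasDerivAt (fun y' => -(2 * f y' / 3) * x) (-(2 * deriv f y / 3) * x) y := by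
      have h0 : HasDerivAt (fun y' => -(2 * f y' / 3)) (-(2 * deriv f y / 3)) y := by
        exact (((hfd y).hasDerivAt.const_mul (2 : ℝ)).div_const 3).neg
      exact h0.mul_const x
    have h1 := (hAd y).hasDerivAt.fun_mul hfy.exp
    have h2 : (fun y' => ψ₁ x y') = fun y' => A y' * Real.exp (-(2 * f y' / 3) * x) :=
      funext fun y' => hψ₁eq x y'
    rw [h2]
    exact h1.congr_deriv (by ring)
  -- ψ₃ formula, multiplied by 6g
  have hψ₃eq : ∀ x y, 6 * g y * ψ₃ x y =
      (3 * deriv A y + 4 * h y * A y - 2 * deriv f y * A y * x) *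
        Real.exp (-(2 * f y / 3) * x) := by
    intro x y
    have h3 := e₃ x y
    rw [(hD2 x y).deriv, hψ₁eq x y] at h3
    linear_combination -h3
  -- key consequence: f' = 0 and f*(3A'+4hA) = 6gkA
  have key : ∀ y, deriv f y = 0 ∧
      f y * (3 * deriv A y + 4 * h y * A y) = 6 * g y * k y * A y := by
    intro y
    have hG : g y ≠ 0 := hg0 y
    have hG6 : (6 : ℝ) * g y ≠ 0 := by simpa using hG
    set p0 : ℝ := (3 * deriv A y + 4 * h y * A y) / (6 * g y) with hp0
    set p1 : ℝ := -(2 * deriv f y * A y) / (6 * g y) with hp1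
    have hψ₃y : ∀ x, ψ₃ x y = (p0 + p1 * x) * Real.exp (-(2 * f y / 3) * x) := by
      intro x
      have h2 : p0 + p1 * x =
          (3 * deriv A y + 4 * h y * A y - 2 * deriv f y * A y * x) / (6 * g y) := by
        rw [hp0, hp1]; ring
      rw [h2, div_mul_eq_mul_div, eq_div_iff hG6]
      linear_combination hψ₃eq x y
    have hDx : ∀ x, HasDerivAt (fun x' => ψ₃ x' y)
        ((p1 + (p0 + p1 * x) * (-(2 * f y / 3))) * Real.exp (-(2 * f y / 3) * x)) x := by
      intro x
      have hfun : (fun x' => ψ₃ x' y)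
          = fun x' => (p0 + p1 * x') * Real.exp (-(2 * f y / 3) * x') := funext hψ₃y
      rw [hfun]
      have hlin : HasDerivAt (fun x' : ℝ => p0 + p1 * x') p1 x := by
        simpa using ((hasDerivAt_id x).const_mul p1).const_add p0
      have hexp : HasDerivAt (fun x' : ℝ => Real.exp (-(2 * f y / 3) * x'))
          (Real.exp (-(2 * f y / 3) * x) * (-(2 * f y / 3))) x := by
        have := ((hasDerivAt_id x).const_mul (-(2 * f y / 3))).exp
        simp only [id_eq] at this
        convert this using 1
        ring
      have := hlin.fun_mul hexp
      exact this.congr_deriv (by ring)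
    have hQ : ∀ x : ℝ, 3 * p1 - 6 * f y * p0 + 6 * k y * A y - 6 * f y * p1 * x = 0 := by
      intro x
      have h4 := e₄ x y
      rw [(hDx x).deriv, hψ₁eq x y, hψ₃y x] at h4
      have h5 : (3 * p1 - 6 * f y * p0 + 6 * k y * A y - 6 * f y * p1 * x) *
          Real.exp (-(2 * f y / 3) * x) = 0 := by linear_combination h4
      rcases mul_eq_zero.mp h5 with h' | h'
      · exact h'
      · exact absurd h' (Real.exp_ne_zero _)
    have h0 := hQ 0
    have h1 := hQ 1
    have hp1z : p1 = 0 := by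
      have h6 : 6 * f y * p1 = 0 := by linarith
      rcases mul_eq_zero.mp h6 with h' | h'
      · rcases mul_eq_zero.mp h' with h'' | h''
        · norm_num at h''
        · exact absurd h'' (hf0 y)
      · exact h'
    have hf' : deriv f y = 0 := by
      rw [hp1, div_eq_zero_iff] at hp1z
      rcases hp1z with h' | h'
      · have : deriv f y * A y = 0 := by linarith
        rcases mul_eq_zero.mp this with h'' | h''
        · exact h''
        · exact absurd h'' (ne_of_gt (hApos y))
      · exact absurd h' hG6
    refine ⟨hf', ?_⟩
    have hfp0 : f y * p0 = k y * A y := by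
      rw [hp1z] at h0
      linarith
    rw [hp0, ← mul_div_assoc, div_eq_iff hG6] at hfp0
    linear_combination hfp0
  intro y
  refine ⟨(key y).1, ?_⟩
  have hG : g y ≠ 0 := hg0 y
  have hG6 : (6 : ℝ) * g y ≠ 0 := by simpa using hG
  set u : ℝ → ℝ := fun t => 3 * deriv A t + 4 * h t * A t with hu
  have hu' : HasDerivAt u
      (3 * deriv (deriv A) y + 4 * (deriv h y * A y + h y * deriv A y)) y := by
    have h1 := (hA1d y).hasDerivAt.const_mul (3 : ℝ)
    have h2 := ((hhd y).hasDerivAt.mul (hAd y).hasDerivAt).const_mul (4 : ℝ)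
    have h3 := h1.add h2
    have h4 : u = fun t => 3 * deriv A t + 4 * (h t * A t) := by
      funext t; simp only [hu]; ring
    rw [h4]; exact h3
  set α : ℝ → ℝ := fun t => u t / (6 * g t) with hα
  have hψ₃0 : ∀ t, ψ₃ 0 t = α t := by
    intro t
    have h1 := hψ₃eq 0 t
    simp only [mul_zero, Real.exp_zero, mul_one] at h1
    rw [hα]
    rw [eq_div_iff (by simpa using hg0 t)]
    linear_combination h1
  have hden : HasDerivAt (fun t => 6 * g t) (6 * deriv g y) y :=
    (hgd y).hasDerivAt.const_mul 6
  have hαd : HasDerivAt α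
      (((3 * deriv (deriv A) y + 4 * (deriv h y * A y + h y * deriv A y)) * (6 * g y)
        - u y * (6 * deriv g y)) / (6 * g y) ^ 2) y := hu'.div hden hG6
  have h2 := e₂ 0 y
  rw [show (fun y' => ψ₃ 0 y') = α from funext hψ₃0, hαd.deriv, hψ₃0 y, hα] at h2
  -- clear denominators in h2
  have hD : 3 * ((3 * deriv (deriv A) y + 4 * (deriv h y * A y + h y * deriv A y)) * (6 * g y)
      - u y * (6 * deriv g y)) - 2 * h y * u y * (6 * g y) = 0 := by
    field_simp at h2
    have h9 : (6 * g y) * (3 * ((3 * deriv (deriv A) y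
        + 4 * (deriv h y * A y + h y * deriv A y)) * (6 * g y)
        - u y * (6 * deriv g y)) - 2 * h y * u y * (6 * g y)) = 0 := by
      linear_combination (36 * g y) * h2
    exact (mul_eq_zero.mp h9).resolve_left hG6
  -- differentiate the identity f*u = 6gkA
  have hLR : (fun t => f t * u t) = fun t => 6 * g t * k t * A t :=
    funext fun t => (key t).2
  have hL' : HasDerivAt (fun t => f t * u t)
      (deriv f y * u y + f y * (3 * deriv (deriv A) y
        + 4 * (deriv h y * A y + h y * deriv A y))) y :=
    (hfd y).hasDerivAt.mul hu'
  have hR' : HasDerivAt (fun t => 6 * g t * k t * A t)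
      (((6 * deriv g y) * k y + (6 * g y) * deriv k y) * A y
        + (6 * g y * k y) * deriv A y) y := by
    exact (hden.mul (hkd y).hasDerivAt).mul (hAd y).hasDerivAt
  have hE : deriv f y * u y + f y * (3 * deriv (deriv A) y
        + 4 * (deriv h y * A y + h y * deriv A y))
      = ((6 * deriv g y) * k y + (6 * g y) * deriv k y) * A y
        + (6 * g y * k y) * deriv A y := by
    have h1 : deriv (fun t => f t * u t) y = deriv (fun t => 6 * g t * k t * A t) y := by
      rw [hLR]
    rw [hL'.deriv, hR'.deriv] at h1
    exact h1
  rw [(key y).1] at hE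
  have hC : f y * u y = 6 * g y * k y * A y := (key y).2
  have h108 : 108 * (g y) ^ 2 * A y *
      (f y * deriv k y - 2 * f y * h y * k y + 2 * g y * (k y) ^ 2) = 0 := by
    simp only [hu] at hD hE hC
    linear_combination (f y) ^ 2 * hD - 18 * g y * f y * hE
      + ((18 * deriv g y + 12 * g y * h y) * f y - 36 * (g y) ^ 2 * k y) * hC
  have hnz : (108 : ℝ) * (g y) ^ 2 * A y ≠ 0 :=
    mul_ne_zero (mul_ne_zero (by norm_num) (pow_ne_zero 2 hG)) (ne_of_gt (hApos y))
  have hX := (mul_eq_zero.mp h108).resolve_left hnz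
  linarith
end

section
/- Let f, h, k, g be smooth functions of y with g nowhere zero, f = ε a nonzero constant, and suppose f k' = -2gk² + 2fhk with k nowhere zero. Let c₅ ≠ 0 and define ψ₃(x,y) = c₅ exp{(2/3)(∫h dy - εx)} and ψ₁ = (ε/k)ψ₃. Then (ψ₁, ψ₂ = 0, ψ₃) satisfies the Liouville system: 3ψ₁ₓ + 2εψ₁ = 0, 3ψ₃ᵧ - 2hψ₃ = 0, 3ψ₁ᵧ + 4hψ₁ - 6gψ₃ = 0, 3ψ₃ₓ + 6kψ₁ - 4εψ₃ = 0. -/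
/-- Under the compatibility condition ε k' = -2gk² + 2εhk (f = ε constant),
ψ₃ = c₅ exp{(2/3)(∫h dy - εx)}, ψ₁ = (ε/k)ψ₃, ψ₂ = 0 solve the Liouville
system for y'' + k y'³ + h y'² + ε y' + g = 0. -/
theorem stmt7 (g h k : ℝ → ℝ) (ε c₅ : ℝ) (hε : ε ≠ 0) (hc₅ : c₅ ≠ 0)
    (hg0 : ∀ y, g y ≠ 0) (hk0 : ∀ y, k y ≠ 0)
    (hkdiff : Differentiable ℝ k)
    (hkc : ∀ y, ε * deriv k y = -2 * g y * (k y) ^ 2 + 2 * ε * h y * k y)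
    (H : ℝ → ℝ) (hH : ∀ y, HasDerivAt H (h y) y) :
    ∀ x y : ℝ,
      3 * deriv (fun x' => (ε / k y) * (c₅ * Real.exp ((2 / 3) * (H y - ε * x')))) x
          + 2 * ε * ((ε / k y) * (c₅ * Real.exp ((2 / 3) * (H y - ε * x)))) = 0
      ∧ 3 * deriv (fun y' => c₅ * Real.exp ((2 / 3) * (H y' - ε * x))) y
          - 2 * h y * (c₅ * Real.exp ((2 / 3) * (H y - ε * x))) = 0
      ∧ 3 * deriv (fun y' => (ε / k y') * (c₅ * Real.exp ((2 / 3) * (H y' - ε * x)))) y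
          + 4 * h y * ((ε / k y) * (c₅ * Real.exp ((2 / 3) * (H y - ε * x))))
          - 6 * g y * (c₅ * Real.exp ((2 / 3) * (H y - ε * x))) = 0
      ∧ 3 * deriv (fun x' => c₅ * Real.exp ((2 / 3) * (H y - ε * x'))) x
          + 6 * k y * ((ε / k y) * (c₅ * Real.exp ((2 / 3) * (H y - ε * x))))
          - 4 * ε * (c₅ * Real.exp ((2 / 3) * (H y - ε * x))) = 0 := by
  intro x y
  set E : ℝ := Real.exp ((2 / 3) * (H y - ε * x)) with hE
  have hEx : HasDerivAt (fun x' => c₅ * Real.exp ((2 / 3) * (H y - ε * x')))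
      (c₅ * E * ((2 / 3) * (-ε))) x := by
    have h1 : HasDerivAt (fun x' : ℝ => (2 / 3) * (H y - ε * x')) ((2 / 3) * (-ε)) x := by
      have : HasDerivAt (fun x' : ℝ => H y - ε * x') (-ε) x := by
        simpa using ((hasDerivAt_id x).const_mul ε).const_sub (H y)
      exact this.const_mul (2 / 3)
    simpa [hE, mul_assoc, mul_comm, mul_left_comm] using (h1.exp.const_mul c₅)
  have hEy : HasDerivAt (fun y' => c₅ * Real.exp ((2 / 3) * (H y' - ε * x)))
      (c₅ * E * ((2 / 3) * h y)) y := by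
    have h1 : HasDerivAt (fun y' : ℝ => (2 / 3) * (H y' - ε * x)) ((2 / 3) * h y) y := by
      have : HasDerivAt (fun y' : ℝ => H y' - ε * x) (h y) y := (hH y).sub_const _
      exact this.const_mul (2 / 3)
    simpa [hE, mul_assoc, mul_comm, mul_left_comm] using (h1.exp.const_mul c₅)
  have hk' : HasDerivAt (fun y' => ε / k y') (-(ε * deriv k y) / (k y) ^ 2) y := by
    have := (hasDerivAt_const y ε).div (hkdiff y).hasDerivAt (hk0 y)
    exact this.congr_deriv (by ring)
  have hP : HasDerivAt (fun y' => (ε / k y') * (c₅ * Real.exp ((2 / 3) * (H y' - ε * x))))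
      ((-(ε * deriv k y) / (k y) ^ 2) * (c₅ * E) + (ε / k y) * (c₅ * E * ((2 / 3) * h y))) y :=
    hk'.mul hEy
  refine ⟨?_, ?_, ?_, ?_⟩
  · rw [deriv_const_mul _ hEx.differentiableAt, hEx.deriv]
    ring
  · rw [hEy.deriv]; ring
  · rw [hP.deriv]
    have hc := hkc y
    have hky := hk0 y
    field_simp
    linear_combination (-3 * c₅ * E) * hc
  · rw [hEx.deriv]
    have hky := hk0 y
    field_simp
    ring
end

section
/- Let g be a smooth nowhere-zero function of y and ε a nonzero constant. Define A = 18g² + 2ε⁴ - 9ε²g' (with ε = 1: A = 18g² + 2 - 9g') and suppose A > 0. Then the function R(y) = A(y) g(y)^{-3} exp{∫(ε²/g - 3g) dy} satisfies R' = 0 if and only if 9gg'' - 27(g')² - (9g² - 15)g' + 2(9g² + 1)(3g² - 1) = 0 (taking ε = 1), i.e., R is a first integral of the second-order ODE BA - gA' = 0 where B = 3g' + 3g² - 1. -/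
/-- With ε = 1, A = 18g² + 2 - 9g' > 0 and P an antiderivative of 1/g - 3g,
the function R = A g⁻³ e^P has R' = 0 iff
9gg'' - 27g'² - (9g² - 15)g' + 2(9g² + 1)(3g² - 1) = 0. -/
theorem stmt9 (g : ℝ → ℝ) (hg : ContDiff ℝ (⊤ : ℕ∞) g) (hg0 : ∀ y, g y ≠ 0)
    (hA : ∀ y, 18 * (g y) ^ 2 + 2 - 9 * deriv g y > 0)
    (P : ℝ → ℝ) (hP : ∀ y, HasDerivAt P (1 / g y - 3 * g y) y) :
    ∀ y : ℝ,
      deriv (fun y' =>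
          (18 * (g y') ^ 2 + 2 - 9 * deriv g y') / (g y') ^ 3 * Real.exp (P y')) y = 0
      ↔ 9 * g y * deriv (deriv g) y - 27 * (deriv g y) ^ 2
          - (9 * (g y) ^ 2 - 15) * deriv g y
          + 2 * (9 * (g y) ^ 2 + 1) * (3 * (g y) ^ 2 - 1) = 0 := by
  intro y
  have hgd : Differentiable ℝ g := hg.differentiable (by simp)
  have hg' : Differentiable ℝ (deriv g) :=
    ((contDiff_infty_iff_deriv.mp (hg.of_le (by simp))).2).differentiable (by simp)
  have hd1 : HasDerivAt g (deriv g y) y := (hgd y).hasDerivAt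
  have hd2 : HasDerivAt (deriv g) (deriv (deriv g) y) y :=
    (hg' y).hasDerivAt
  have hA' : HasDerivAt (fun y' => 18 * (g y') ^ 2 + 2 - 9 * deriv g y')
      (36 * g y * deriv g y - 9 * deriv (deriv g) y) y := by
    have h1 := ((hd1.fun_pow 2).const_mul (18 : ℝ)).add_const 2
    have := h1.sub (hd2.const_mul (9 : ℝ))
    refine this.congr_deriv ?_
    ring
  have hg3 : HasDerivAt (fun y' => (g y') ^ 3) (3 * (g y) ^ 2 * deriv g y) y := by
    have := hd1.fun_pow 3
    refine this.congr_deriv ?_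
    try ring
  have hg3ne : (g y) ^ 3 ≠ 0 := pow_ne_zero _ (hg0 y)
  have hquot := hA'.fun_div hg3 hg3ne
  have hexp : HasDerivAt (fun y' => Real.exp (P y'))
      (Real.exp (P y) * (1 / g y - 3 * g y)) y := (hP y).exp
  have hR := hquot.fun_mul hexp
  rw [hR.deriv]
  set g1 := deriv g y
  set g2 := deriv (deriv g) y
  have key : ((36 * g y * g1 - 9 * g2) * g y ^ 3 -
        (18 * g y ^ 2 + 2 - 9 * g1) * (3 * g y ^ 2 * g1)) / (g y ^ 3) ^ 2 *
        Real.exp (P y) +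
      (18 * g y ^ 2 + 2 - 9 * g1) / g y ^ 3 * (Real.exp (P y) * (1 / g y - 3 * g y))
      = -(9 * g y * g2 - 27 * g1 ^ 2 - (9 * (g y) ^ 2 - 15) * g1
          + 2 * (9 * (g y) ^ 2 + 1) * (3 * (g y) ^ 2 - 1)) * (Real.exp (P y) / (g y) ^ 4) := by
    field_simp [hg0 y]
    ring
  rw [key]
  have hne : Real.exp (P y) / (g y) ^ 4 ≠ 0 :=
    div_ne_zero (Real.exp_ne_zero _) (pow_ne_zero _ (hg0 y))
  constructor
  · intro h
    rcases mul_eq_zero.mp h with h | h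
    · linarith [neg_eq_zero.mp h]
    · exact absurd h hne
  · intro h
    rw [h]
    ring
end

section
/- Let γ ≠ 0 and define H = -γ²( p₁²/2 - γ² y³ p₁ p₂ + (γ² y⁴/2)(γ²y² - 1) p₂² ) on T*ℝ². On the open set where y ≠ 0, p₂ ≠ 0 and γ²y³p₂ - y p₂ - 2p₁ ≠ 0, the function T = ((2p₁ - (γ²y³ - y)p₂)/(y³p₂)) · exp{2x - 2p₁(γ²y³p₂ - yp₂ - p₁)/(γ²y³(γ²y³p₂ - yp₂ - 2p₁)p₂)} satisfies {T, H} = 0. -/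
private lemma hd_congr {f g : ℝ → ℝ} {f' g' t : ℝ} (h : HasDerivAt f f' t)
    (hfg : ∀ s, g s = f s) (h' : g' = f') : HasDerivAt g g' t := by
  subst h'
  exact h.congr_of_eventuallyEq (Filter.Eventually.of_forall hfg)

private lemma hdPoly (a0 a1 a2 a3 a4 a5 a6 t : ℝ) :
    HasDerivAt (fun s : ℝ => a0 + a1 * s ^ 1 + a2 * s ^ 2 + a3 * s ^ 3 + a4 * s ^ 4
        + a5 * s ^ 5 + a6 * s ^ 6)
      (a1 + 2 * a2 * t + 3 * a3 * t ^ 2 + 4 * a4 * t ^ 3 + 5 * a5 * t ^ 4 + 6 * a6 * t ^ 5) t := by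
  have h := ((((((hasDerivAt_const t a0).add ((hasDerivAt_pow 1 t).const_mul a1)).add
      ((hasDerivAt_pow 2 t).const_mul a2)).add ((hasDerivAt_pow 3 t).const_mul a3)).add
      ((hasDerivAt_pow 4 t).const_mul a4)).add ((hasDerivAt_pow 5 t).const_mul a5)).add
      ((hasDerivAt_pow 6 t).const_mul a6)
  exact hd_congr h (fun s => by simp only [Pi.add_apply]) (by push_cast; ring)

/-- Canonical Poisson bracket on T*ℝ² in coordinates (x, y, p₁, p₂). -/
noncomputable def poissonBracket (F G : ℝ → ℝ → ℝ → ℝ → ℝ)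
    (x y p₁ p₂ : ℝ) : ℝ :=
  deriv (fun x' => F x' y p₁ p₂) x * deriv (fun p₁' => G x y p₁' p₂) p₁
  + deriv (fun y' => F x y' p₁ p₂) y * deriv (fun p₂' => G x y p₁ p₂') p₂
  - deriv (fun p₁' => F x y p₁' p₂) p₁ * deriv (fun x' => G x' y p₁ p₂) x
  - deriv (fun p₂' => F x y p₁ p₂') p₂ * deriv (fun y' => G x y' p₁ p₂) y

/-- The Hamiltonian of Example 3 (case γ). -/
noncomputable def Hγ (γ : ℝ) : ℝ → ℝ → ℝ → ℝ → ℝ :=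
  fun _ y p₁ p₂ => -γ ^ 2 * (p₁ ^ 2 / 2 - γ ^ 2 * y ^ 3 * p₁ * p₂
      + (γ ^ 2 * y ^ 4 / 2) * (γ ^ 2 * y ^ 2 - 1) * p₂ ^ 2)

/-- The transcendental first integral T of Example 3. -/
noncomputable def Tγ (γ : ℝ) : ℝ → ℝ → ℝ → ℝ → ℝ :=
  fun x y p₁ p₂ =>
    ((2 * p₁ - (γ ^ 2 * y ^ 3 - y) * p₂) / (y ^ 3 * p₂)) *
      Real.exp (2 * x - 2 * p₁ * (γ ^ 2 * y ^ 3 * p₂ - y * p₂ - p₁) /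
        (γ ^ 2 * y ^ 3 * (γ ^ 2 * y ^ 3 * p₂ - y * p₂ - 2 * p₁) * p₂))

set_option maxHeartbeats 4000000 in
/-- On the open set y ≠ 0, p₂ ≠ 0, γ²y³p₂ - yp₂ - 2p₁ ≠ 0, T is a first
integral: {T, H} = 0. -/
theorem stmt12 (γ : ℝ) (hγ : γ ≠ 0) :
    ∀ x y p₁ p₂ : ℝ, y ≠ 0 → p₂ ≠ 0 →
      γ ^ 2 * y ^ 3 * p₂ - y * p₂ - 2 * p₁ ≠ 0 →
      poissonBracket (Tγ γ) (Hγ γ) x y p₁ p₂ = 0 := by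
  intro x y p₁ p₂ hy hp₂ h3
  have hDAne : y ^ 3 * p₂ ≠ 0 := mul_ne_zero (pow_ne_zero 3 hy) hp₂
  have hDBne : γ ^ 2 * y ^ 3 * (γ ^ 2 * y ^ 3 * p₂ - y * p₂ - 2 * p₁) * p₂ ≠ 0 :=
    mul_ne_zero (mul_ne_zero (mul_ne_zero (pow_ne_zero 2 hγ) (pow_ne_zero 3 hy)) h3) hp₂
  -- derivative of T in x
  have hBx : HasDerivAt (fun s : ℝ => 2 * s - 2 * p₁ * (γ ^ 2 * y ^ 3 * p₂ - y * p₂ - p₁) /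
      (γ ^ 2 * y ^ 3 * (γ ^ 2 * y ^ 3 * p₂ - y * p₂ - 2 * p₁) * p₂)) 2 x :=
    hd_congr (hdPoly (-(2 * p₁ * (γ ^ 2 * y ^ 3 * p₂ - y * p₂ - p₁) / (γ ^ 2 * y ^ 3 * (γ ^ 2 * y ^ 3 * p₂ - y * p₂ - 2 * p₁) * p₂))) 2 0 0 0 0 0 x) (fun s => by ring) (by ring)
  have hTx := hBx.exp.const_mul ((2 * p₁ - (γ ^ 2 * y ^ 3 - y) * p₂) / (y ^ 3 * p₂))
  -- derivatives in y
  have hNAy : HasDerivAt (fun s : ℝ => 2 * p₁ - (γ ^ 2 * s ^ 3 - s) * p₂) (p₂ - 3 * γ ^ 2 * p₂ * y ^ 2) y :=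
    hd_congr (hdPoly (2 * p₁) (p₂) (0) (-(γ ^ 2 * p₂)) (0) (0) (0) y) (fun s => by ring) (by ring)
  have hDAy : HasDerivAt (fun s : ℝ => s ^ 3 * p₂) (3 * p₂ * y ^ 2) y :=
    hd_congr (hdPoly (0) (0) (0) (p₂) (0) (0) (0) y) (fun s => by ring) (by ring)
  have hNBy : HasDerivAt (fun s : ℝ => 2 * p₁ * (γ ^ 2 * s ^ 3 * p₂ - s * p₂ - p₁)) (6 * γ ^ 2 * p₁ * p₂ * y ^ 2 - 2 * p₁ * p₂) y :=
    hd_congr (hdPoly (-(2 * p₁ ^ 2)) (-(2 * p₁ * p₂)) (0) (2 * γ ^ 2 * p₁ * p₂) (0) (0) (0) y) (fun s => by ring) (by ring)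
  have hDBy : HasDerivAt (fun s : ℝ => γ ^ 2 * s ^ 3 * (γ ^ 2 * s ^ 3 * p₂ - s * p₂ - 2 * p₁) * p₂) (6 * γ ^ 4 * p₂ ^ 2 * y ^ 5 - 4 * γ ^ 2 * p₂ ^ 2 * y ^ 3 - 6 * γ ^ 2 * p₁ * p₂ * y ^ 2) y :=
    hd_congr (hdPoly (0) (0) (0) (-(2 * γ ^ 2 * p₁ * p₂)) (-(γ ^ 2 * p₂ ^ 2)) (0) (γ ^ 4 * p₂ ^ 2) y) (fun s => by ring) (by ring)
  have hHy : HasDerivAt (fun s : ℝ => -γ ^ 2 * (p₁ ^ 2 / 2 - γ ^ 2 * s ^ 3 * p₁ * p₂ + (γ ^ 2 * s ^ 4 / 2) * (γ ^ 2 * s ^ 2 - 1) * p₂ ^ 2)) (3 * γ ^ 4 * p₁ * p₂ * y ^ 2 + 2 * γ ^ 4 * p₂ ^ 2 * y ^ 3 - 3 * γ ^ 6 * p₂ ^ 2 * y ^ 5) y :=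
    hd_congr (hdPoly (-(γ ^ 2 * p₁ ^ 2 / 2)) (0) (0) (γ ^ 4 * p₁ * p₂) (γ ^ 4 * p₂ ^ 2 / 2) (0) (-(γ ^ 6 * p₂ ^ 2 / 2)) y) (fun s => by ring) (by ring)
  have hTy := (hNAy.div hDAy hDAne).mul
    (((hNBy.div hDBy hDBne).const_sub (2 * x)).exp)
  -- derivatives in p₁
  have hNAp1 : HasDerivAt (fun s : ℝ => 2 * s - (γ ^ 2 * y ^ 3 - y) * p₂) (2) p₁ :=
    hd_congr (hdPoly (-((γ ^ 2 * y ^ 3 - y) * p₂)) (2) (0) (0) (0) (0) (0) p₁) (fun s => by ring) (by ring)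
  have hDAp1 : HasDerivAt (fun s : ℝ => y ^ 3 * p₂) (0) p₁ :=
    hd_congr (hdPoly (y ^ 3 * p₂) (0) (0) (0) (0) (0) (0) p₁) (fun s => by ring) (by ring)
  have hNBp1 : HasDerivAt (fun s : ℝ => 2 * s * (γ ^ 2 * y ^ 3 * p₂ - y * p₂ - s)) (2 * (γ ^ 2 * y ^ 3 * p₂ - y * p₂) - 4 * p₁) p₁ :=
    hd_congr (hdPoly (0) (2 * (γ ^ 2 * y ^ 3 * p₂ - y * p₂)) (-2) (0) (0) (0) (0) p₁) (fun s => by ring) (by ring)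
  have hDBp1 : HasDerivAt (fun s : ℝ => γ ^ 2 * y ^ 3 * (γ ^ 2 * y ^ 3 * p₂ - y * p₂ - 2 * s) * p₂) (-(2 * γ ^ 2 * y ^ 3 * p₂)) p₁ :=
    hd_congr (hdPoly (γ ^ 2 * y ^ 3 * (γ ^ 2 * y ^ 3 * p₂ - y * p₂) * p₂) (-(2 * γ ^ 2 * y ^ 3 * p₂)) (0) (0) (0) (0) (0) p₁) (fun s => by ring) (by ring)
  have hHp1 : HasDerivAt (fun s : ℝ => -γ ^ 2 * (s ^ 2 / 2 - γ ^ 2 * y ^ 3 * s * p₂ + (γ ^ 2 * y ^ 4 / 2) * (γ ^ 2 * y ^ 2 - 1) * p₂ ^ 2)) (γ ^ 4 * y ^ 3 * p₂ - γ ^ 2 * p₁) p₁ :=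
    hd_congr (hdPoly (-(γ ^ 2 * ((γ ^ 2 * y ^ 4 / 2) * (γ ^ 2 * y ^ 2 - 1) * p₂ ^ 2))) (γ ^ 4 * y ^ 3 * p₂) (-(γ ^ 2 / 2)) (0) (0) (0) (0) p₁) (fun s => by ring) (by ring)
  have hTp1 := (hNAp1.div hDAp1 hDAne).mul
    (((hNBp1.div hDBp1 hDBne).const_sub (2 * x)).exp)
  -- derivatives in p₂
  have hNAp2 : HasDerivAt (fun s : ℝ => 2 * p₁ - (γ ^ 2 * y ^ 3 - y) * s) (y - γ ^ 2 * y ^ 3) p₂ :=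
    hd_congr (hdPoly (2 * p₁) (y - γ ^ 2 * y ^ 3) (0) (0) (0) (0) (0) p₂) (fun s => by ring) (by ring)
  have hDAp2 : HasDerivAt (fun s : ℝ => y ^ 3 * s) (y ^ 3) p₂ :=
    hd_congr (hdPoly (0) (y ^ 3) (0) (0) (0) (0) (0) p₂) (fun s => by ring) (by ring)
  have hNBp2 : HasDerivAt (fun s : ℝ => 2 * p₁ * (γ ^ 2 * y ^ 3 * s - y * s - p₁)) (2 * p₁ * (γ ^ 2 * y ^ 3 - y)) p₂ :=
    hd_congr (hdPoly (-(2 * p₁ ^ 2)) (2 * p₁ * (γ ^ 2 * y ^ 3 - y)) (0) (0) (0) (0) (0) p₂) (fun s => by ring) (by ring)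
  have hDBp2 : HasDerivAt (fun s : ℝ => γ ^ 2 * y ^ 3 * (γ ^ 2 * y ^ 3 * s - y * s - 2 * p₁) * s) (2 * γ ^ 2 * y ^ 3 * (γ ^ 2 * y ^ 3 - y) * p₂ - 2 * γ ^ 2 * y ^ 3 * p₁) p₂ :=
    hd_congr (hdPoly (0) (-(2 * γ ^ 2 * y ^ 3 * p₁)) (γ ^ 2 * y ^ 3 * (γ ^ 2 * y ^ 3 - y)) (0) (0) (0) (0) p₂) (fun s => by ring) (by ring)
  have hHp2 : HasDerivAt (fun s : ℝ => -γ ^ 2 * (p₁ ^ 2 / 2 - γ ^ 2 * y ^ 3 * p₁ * s + (γ ^ 2 * y ^ 4 / 2) * (γ ^ 2 * y ^ 2 - 1) * s ^ 2)) (γ ^ 4 * y ^ 3 * p₁ + (γ ^ 4 * y ^ 4 - γ ^ 6 * y ^ 6) * p₂) p₂ :=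
    hd_congr (hdPoly (-(γ ^ 2 * p₁ ^ 2 / 2)) (γ ^ 4 * y ^ 3 * p₁) ((γ ^ 4 * y ^ 4 - γ ^ 6 * y ^ 6) / 2) (0) (0) (0) (0) p₂) (fun s => by ring) (by ring)
  have hTp2 := (hNAp2.div hDAp2 hDAne).mul
    (((hNBp2.div hDBp2 hDBne).const_sub (2 * x)).exp)
  have hHx : HasDerivAt (fun _ : ℝ => -γ ^ 2 * (p₁ ^ 2 / 2 - γ ^ 2 * y ^ 3 * p₁ * p₂ + (γ ^ 2 * y ^ 4 / 2) * (γ ^ 2 * y ^ 2 - 1) * p₂ ^ 2)) 0 x := hasDerivAt_const x _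
  simp only [poissonBracket, Tγ, Hγ]
  simp only [Pi.div_def, Pi.mul_def] at hTy hTp1 hTp2
  rw [hTx.deriv, hTy.deriv, hTp1.deriv, hTp2.deriv, hHx.deriv, hHy.deriv, hHp1.deriv, hHp2.deriv]
  have h6 : γ ^ 2 * y ^ 3 * p₂ - y * p₂ - 2 * p₁ ≠ 0 := h3
  have h7 : y * (γ ^ 2 * y ^ 2 - 1) * p₂ - 2 * p₁ ≠ 0 := by
    rw [show y * (γ ^ 2 * y ^ 2 - 1) * p₂ - 2 * p₁ = γ ^ 2 * y ^ 3 * p₂ - y * p₂ - 2 * p₁ by ring]; exact h3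
  generalize Real.exp (2 * x - 2 * p₁ * (γ ^ 2 * y ^ 3 * p₂ - y * p₂ - p₁) / (γ ^ 2 * y ^ 3 * (γ ^ 2 * y ^ 3 * p₂ - y * p₂ - 2 * p₁) * p₂)) = E

  field_simp
  ring
end

section
/- Let v, w be smooth nowhere-zero functions of y, and set A₀ ≠ 0, A₁ = -3A₀/v, A₂ = 3A₀/v² + 3v'/(2v) - w'/(2w), A₃ = -A₀/v³ + (1/(2v))(w'/w - v'/v). Then with g = -A₀, f = -A₁, h = -A₂, k = -A₃, the identity 27kg² - 9hfg + 2f³ + 9g f' - 9f g' = 0 holds, i.e., A = 0. -/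
/-- The Agapov–Shestakov ansatz A₁ = -3A₀/v, A₂ = 3A₀/v² + 3v'/(2v) - w'/(2w),
A₃ = -A₀/v³ + (1/(2v))(w'/w - v'/v), with g = -A₀, f = -A₁, h = -A₂, k = -A₃,
implies A = 27kg² - 9hfg + 2f³ + 9gf' - 9fg' = 0. -/
theorem stmt15 (v w A₀ : ℝ → ℝ)
    (hv : Differentiable ℝ v) (hw : Differentiable ℝ w)
    (hA₀ : Differentiable ℝ A₀)
    (hv0 : ∀ y, v y ≠ 0) (hw0 : ∀ y, w y ≠ 0) (hA₀0 : ∀ y, A₀ y ≠ 0) :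
    ∀ y : ℝ,
      27 * (-(-(A₀ y) / (v y) ^ 3
              + (1 / (2 * v y)) * (deriv w y / w y - deriv v y / v y)))
          * (-(A₀ y)) ^ 2
      - 9 * (-(3 * A₀ y / (v y) ^ 2 + 3 * deriv v y / (2 * v y)
              - deriv w y / (2 * w y)))
          * (-(-3 * A₀ y / v y)) * (-(A₀ y))
      + 2 * (-(-3 * A₀ y / v y)) ^ 3
      + 9 * (-(A₀ y)) * deriv (fun y' => -(-3 * A₀ y' / v y')) y
      - 9 * (-(-3 * A₀ y / v y)) * deriv (fun y' => -(A₀ y')) y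
      = 0 := by
  intro y
  have h1 : deriv (fun y' => -(-3 * A₀ y' / v y')) y
      = -((deriv (fun y' => -3 * A₀ y') y * v y - (-3 * A₀ y) * deriv v y) / (v y) ^ 2) := by
    rw [deriv.fun_neg, deriv_fun_div (by exact (hA₀.const_mul (-3)).differentiableAt)
      (hv.differentiableAt) (hv0 y)]
  have h2 : deriv (fun y' => -3 * A₀ y') y = -3 * deriv A₀ y := by
    simp [deriv_const_mul _ hA₀.differentiableAt]
  have h3 : deriv (fun y' => -(A₀ y')) y = -deriv A₀ y := by
    simp
  rw [h1, h2, h3]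
  field_simp
  ring_nf
  linear_combination (-27 * A₀ y ^ 2 * deriv v y * (v y)⁻¹ ^ 2 * (v y * (v y)⁻¹) * (3 * (v y * (v y)⁻¹) + 2) - 162 * A₀ y ^ 3 * (v y)⁻¹ ^ 3 * (v y * (v y)⁻¹ + 1)) * (mul_inv_cancel₀ (hv0 y))
end

section
/- Let f, g be smooth functions of y with g nowhere zero, let C be as above with C' nowhere zero, and suppose A = 27kg² - 9hfg + 2f³ + 9gf' - 9fg' = 0 (defining k in terms of f, g, h). Consider the vector field X = u ∂_y - (ku³ + hu² + fu + g) ∂_u. Then R(y,u) = 9gC'u²/(fu + 3g)² + 2C satisfies X(R) = 0 on the region where fu + 3g ≠ 0. -/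
/-- Under the linearizability condition A = 0 (which determines
k = (9hfg - 2f³ - 9gf' + 9fg')/(27g²)), with C' = g e^{2∫(h - f²/(3g))dy},
the function R(y,u) = 9gC'u²/(fu + 3g)² + 2C is a first integral of
X = u ∂_y - (ku³ + hu² + fu + g) ∂_u where fu + 3g ≠ 0. -/
theorem stmt17 (f g h : ℝ → ℝ)
    (hf : ContDiff ℝ (⊤ : ℕ∞) f) (hg : ContDiff ℝ (⊤ : ℕ∞) g) (hh : ContDiff ℝ (⊤ : ℕ∞) h)
    (hg0 : ∀ y, g y ≠ 0)
    (Q C : ℝ → ℝ)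
    (hQ : ∀ y, HasDerivAt Q (2 * (h y - (f y) ^ 2 / (3 * g y))) y)
    (hC : ∀ y, HasDerivAt C (g y * Real.exp (Q y)) y) :
    ∀ y u : ℝ, f y * u + 3 * g y ≠ 0 →
      u * deriv (fun y' =>
            9 * g y' * deriv C y' * u ^ 2 / (f y' * u + 3 * g y') ^ 2 + 2 * C y') y
      - ((9 * h y * f y * g y - 2 * (f y) ^ 3 - 9 * g y * deriv f y
            + 9 * f y * deriv g y) / (27 * (g y) ^ 2) * u ^ 3
          + h y * u ^ 2 + f y * u + g y) *
          deriv (fun u' =>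
            9 * g y * deriv C y * u' ^ 2 / (f y * u' + 3 * g y) ^ 2 + 2 * C y) u
      = 0 := by
  intro y u hne
  have hdC : deriv C = fun t => g t * Real.exp (Q t) := funext fun t => (hC t).deriv
  have hfd : HasDerivAt f (deriv f y) y := (hf.differentiable (by simp) y).hasDerivAt
  have hgd : HasDerivAt g (deriv g y) y := (hg.differentiable (by simp) y).hasDerivAt
  have hE : HasDerivAt (fun t => Real.exp (Q t))
      (Real.exp (Q y) * (2 * (h y - (f y) ^ 2 / (3 * g y)))) y := (hQ y).exp
  have hden : HasDerivAt (fun t => (f t * u + 3 * g t) ^ 2)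
      ((2 : ℕ) * (f y * u + 3 * g y) ^ 1 * (deriv f y * u + 3 * deriv g y)) y :=
    ((hfd.mul_const u).add (hgd.const_mul 3)).pow 2
  have hnum := ((hgd.const_mul 9).mul (hgd.mul hE)).mul_const (u ^ 2)
  have hden0 : (f y * u + 3 * g y) ^ 2 ≠ 0 := pow_ne_zero _ hne
  have hY := (hnum.div hden hden0).add ((hC y).const_mul 2)
  have hU := (((hasDerivAt_pow 2 u).const_mul (9 * g y * (g y * Real.exp (Q y)))).div
      ((((hasDerivAt_id u).const_mul (f y)).add_const (3 * g y)).pow 2) hden0).add_const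
      (2 * C y)
  simp only [id_eq] at hU
  simp only [Pi.mul_apply, Pi.pow_apply] at hY hU
  simp only [hdC]
  rw [(show HasDerivAt (fun y' => 9 * g y' * (g y' * Real.exp (Q y')) * u ^ 2 / (f y' * u + 3 * g y') ^ 2 + 2 * C y') _ y from hY).deriv,
    (show HasDerivAt (fun u' => 9 * g y * (g y * Real.exp (Q y)) * u' ^ 2 / (f y * u' + 3 * g y) ^ 2 + 2 * C y) _ u from hU).deriv]
  have hgy : g y ≠ 0 := hg0 y
  have hg3 : (3 : ℝ) * g y ≠ 0 := mul_ne_zero three_ne_zero hgy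
  have hne' : u * f y + g y * 3 ≠ 0 := by rwa [mul_comm u, mul_comm (g y)]
  field_simp
  ring
end

section
/- Consider the vector field X = u ∂_y - (u³/y + (3 - 1/y)u² + 3yu + y²) ∂_u corresponding to the oscillator with μ = 1, ν = 0: y'' + (1/y)y'³ + (3 - 1/y)y'² + 3y y' + y² = 0 on y > 0. Then R(y,u) = u²/(u+y)² + 2y satisfies X(R) = 0 on the region u + y ≠ 0, i.e., R is a first integral. -/
/-- For the oscillator y'' + (1/y)y'³ + (3 - 1/y)y'² + 3y·y' + y² = 0 (y > 0),
R(y,u) = u²/(u+y)² + 2y is a first integral of the associated vector field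
X = u ∂_y - ((1/y)u³ + (3 - 1/y)u² + 3yu + y²) ∂_u on the region u + y ≠ 0. -/
theorem stmt19 :
    ∀ y u : ℝ, 0 < y → u + y ≠ 0 →
      u * deriv (fun y' => u ^ 2 / (u + y') ^ 2 + 2 * y') y
      - ((1 / y) * u ^ 3 + (3 - 1 / y) * u ^ 2 + 3 * y * u + y ^ 2) *
          deriv (fun u' => u' ^ 2 / (u' + y) ^ 2 + 2 * y) u
      = 0 := by
  intro y u hy hne
  have h2 : ((u + y) ^ 2 : ℝ) ≠ 0 := pow_ne_zero _ hne
  have hd1 : HasDerivAt (fun y' => u ^ 2 / (u + y') ^ 2 + 2 * y')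
      (-(u ^ 2 * (2 * (u + y))) / ((u + y) ^ 2) ^ 2 + 2) y := by
    have h : HasDerivAt (fun y' : ℝ => (u + y') ^ 2) (2 * (u + y)) y := by
      have := ((hasDerivAt_id y).const_add u).pow 2
      simpa [Pi.pow_def] using this
    have hdiv := (hasDerivAt_const y (u ^ 2)).div h h2
    simpa [Pi.div_def, Pi.add_def] using hdiv.add ((hasDerivAt_id y).const_mul 2)
  have hd2 : HasDerivAt (fun u' => u' ^ 2 / (u' + y) ^ 2 + 2 * y)
      ((2 * u * (u + y) ^ 2 - u ^ 2 * (2 * (u + y))) / ((u + y) ^ 2) ^ 2) u := by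
    have hn : HasDerivAt (fun u' : ℝ => u' ^ 2) (2 * u) u := by
      simpa [Pi.pow_def] using (hasDerivAt_id u).pow 2
    have h : HasDerivAt (fun u' : ℝ => (u' + y) ^ 2) (2 * (u + y)) u := by
      simpa [Pi.pow_def] using ((hasDerivAt_id u).add_const y).pow 2
    simpa using (hn.div h h2).add_const (2 * y)
  rw [hd1.deriv, hd2.deriv]
  field_simp
  ring
end
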